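/- Let γ: ℝ → ℝ² be a smooth ℓ-periodic curve. Then ∫∫_{[0,ℓ]²} [L₁₁(t₁,t₂) + L₂₂(t₁,t₂)] · L₁₂(t₁,t₂) dt₁ dt₂ = −2 A(D) ∫₀^ℓ ω(γ'(t), γ''(t)) dt, where A(D) := ½ ∫₀^ℓ ω(γ(t), γ'(t)) dt. -/

import Mathlib

open Set MeasureTheory intervalIntegral

/-- The standard area form on ℝ². -/
noncomputable def om (u v : ℝ × ℝ) : ℝ := u.1 * v.2 - v.1 * u.2

/-- L₁₁(t₁,t₂) = ω(γ''(t₁), γ(t₂)). -/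
noncomputable def L11 (γ : ℝ → ℝ × ℝ) (t₁ t₂ : ℝ) : ℝ := om (deriv (deriv γ) t₁) (γ t₂)

/-- L₂₂(t₁,t₂) = ω(γ(t₁), γ''(t₂)). -/
noncomputable def L22 (γ : ℝ → ℝ × ℝ) (t₁ t₂ : ℝ) : ℝ := om (γ t₁) (deriv (deriv γ) t₂)

/-- L₁₂(t₁,t₂) = ω(γ'(t₁), γ'(t₂)). -/
noncomputable def L12 (γ : ℝ → ℝ × ℝ) (t₁ t₂ : ℝ) : ℝ := om (deriv γ t₁) (deriv γ t₂)

/-- Auxiliary: the t₂-derivative of Φ(t₂) = ω(γ t₁, γ' t₂) ω(γ' t₁, γ' t₂). -/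
noncomputable def D2fun (γ : ℝ → ℝ × ℝ) (t₁ t₂ : ℝ) : ℝ :=
  om (γ t₁) (deriv (deriv γ) t₂) * om (deriv γ t₁) (deriv γ t₂) +
    om (γ t₁) (deriv γ t₂) * om (deriv γ t₁) (deriv (deriv γ) t₂)

lemma hasDerivAt_om_right (u : ℝ × ℝ) {f : ℝ → ℝ × ℝ} {f' : ℝ × ℝ} {x : ℝ}
    (hf : HasDerivAt f f' x) : HasDerivAt (fun t => om u (f t)) (om u f') x := by
  have h1 : HasDerivAt (fun t => (f t).1) f'.1 x := by
    exact (ContinuousLinearMap.fst ℝ ℝ ℝ).hasFDerivAt.comp_hasDerivAt x hf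
  have h2 : HasDerivAt (fun t => (f t).2) f'.2 x := by
    exact (ContinuousLinearMap.snd ℝ ℝ ℝ).hasFDerivAt.comp_hasDerivAt x hf
  unfold om; exact (h2.const_mul u.1).sub (h1.mul_const u.2)

lemma continuous_om_comp {α : Type*} [TopologicalSpace α] {f g : α → ℝ × ℝ}
    (hf : Continuous f) (hg : Continuous g) : Continuous (fun t => om (f t) (g t)) := by
  unfold om; fun_prop

/-- Integration by parts lemma:
∫∫ [L₁₁ + L₂₂]·L₁₂ = -2 A(D) ∫ ω(γ', γ''). -/
theorem integral_L11_add_L22_mul_L12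
    (ℓ : ℝ) (hℓ : 0 < ℓ) (γ : ℝ → ℝ × ℝ)
    (hsmooth : ContDiff ℝ (⊤ : ℕ∞) γ)
    (hper : ∀ t, γ (t + ℓ) = γ t) :
    (∫ t₁ in (0:ℝ)..ℓ, ∫ t₂ in (0:ℝ)..ℓ,
        (L11 γ t₁ t₂ + L22 γ t₁ t₂) * L12 γ t₁ t₂)
      = -2 * ((1 / 2) * ∫ t in (0:ℝ)..ℓ, om (γ t) (deriv γ t))
          * ∫ t in (0:ℝ)..ℓ, om (deriv γ t) (deriv (deriv γ) t) := by
  have h0 : (0:ℝ) ≤ ℓ := hℓ.le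
  -- basic smoothness facts
  have hsm : ContDiff ℝ ((⊤ : ℕ∞) : WithTop ℕ∞) γ := hsmooth.of_le (by simp)
  have hγdiff : Differentiable ℝ γ := hsm.differentiable (by simp)
  have hb : ContDiff ℝ ((⊤ : ℕ∞) : WithTop ℕ∞) (deriv γ) := (contDiff_infty_iff_deriv.mp hsm).2
  have hbdiff : Differentiable ℝ (deriv γ) := hb.differentiable (by simp)
  have hb' : ∀ t, HasDerivAt (deriv γ) (deriv (deriv γ) t) t :=
    fun t => (hbdiff t).hasDerivAt
  have hcγ : Continuous γ := hsmooth.continuous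
  have hcb : Continuous (deriv γ) := hbdiff.continuous
  have hcc : Continuous (deriv (deriv γ)) :=
    ((contDiff_infty_iff_deriv.mp hb).2).continuous
  -- periodicity of the derivative
  have hperb : ∀ t, deriv γ (t + ℓ) = deriv γ t := by
    intro t
    have hfun : γ = fun x => γ (x + ℓ) := funext fun x => (hper x).symm
    conv_rhs => rw [hfun]
    rw [deriv_comp_add_const]
  have hbl : deriv γ ℓ = deriv γ 0 := by simpa using hperb 0
  -- continuity of the various integrands
  have hcp : Continuous (fun t => om (γ t) (deriv γ t)) := continuous_om_comp hcγ hcb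
  have hcq : Continuous (fun t => om (deriv γ t) (deriv (deriv γ) t)) :=
    continuous_om_comp hcb hcc
  have hcD2 : Continuous (fun p : ℝ × ℝ => D2fun γ p.1 p.2) := by
    unfold D2fun
    exact ((continuous_om_comp (hcγ.comp continuous_fst) (hcc.comp continuous_snd)).mul
        (continuous_om_comp (hcb.comp continuous_fst) (hcb.comp continuous_snd))).add
      ((continuous_om_comp (hcγ.comp continuous_fst) (hcb.comp continuous_snd)).mul
        (continuous_om_comp (hcb.comp continuous_fst) (hcc.comp continuous_snd)))
  have hcD2a : ∀ t₁, Continuous (fun t₂ => D2fun γ t₁ t₂) :=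
    fun t₁ => hcD2.comp (continuous_const.prodMk continuous_id)
  have hcD2b : ∀ t₁, Continuous (fun t₂ => D2fun γ t₂ t₁) :=
    fun t₁ => hcD2.comp (continuous_id.prodMk continuous_const)
  -- FTC: the inner integral of D2fun vanishes
  have hD2int : ∀ t₁, (∫ t₂ in (0:ℝ)..ℓ, D2fun γ t₁ t₂) = 0 := by
    intro t₁
    have hΦ : ∀ s : ℝ, HasDerivAt
        (fun s => om (γ t₁) (deriv γ s) * om (deriv γ t₁) (deriv γ s))
        (D2fun γ t₁ s) s := fun s =>
      (hasDerivAt_om_right _ (hb' s)).mul (hasDerivAt_om_right _ (hb' s))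
    rw [intervalIntegral.integral_eq_sub_of_hasDerivAt (fun s _ => hΦ s)
      ((hcD2a t₁).intervalIntegrable 0 ℓ)]
    rw [hbl, sub_self]
  -- the pointwise algebraic (Plücker) identity
  have key : ∀ t₁ t₂ : ℝ, (L11 γ t₁ t₂ + L22 γ t₁ t₂) * L12 γ t₁ t₂
      = (1/2) * (D2fun γ t₂ t₁ + D2fun γ t₁ t₂
          - om (γ t₁) (deriv γ t₁) * om (deriv γ t₂) (deriv (deriv γ) t₂)
          - om (γ t₂) (deriv γ t₂) * om (deriv γ t₁) (deriv (deriv γ) t₁)) := by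
    intro t₁ t₂
    simp only [L11, L22, L12, D2fun, om]
    ring
  -- abbreviations for the two basic integrals
  set P : ℝ := ∫ t in (0:ℝ)..ℓ, om (γ t) (deriv γ t) with hP
  set Q : ℝ := ∫ t in (0:ℝ)..ℓ, om (deriv γ t) (deriv (deriv γ) t) with hQ
  -- inner integral computation
  have hinner : ∀ t₁, (∫ t₂ in (0:ℝ)..ℓ, (L11 γ t₁ t₂ + L22 γ t₁ t₂) * L12 γ t₁ t₂)
      = (1/2) * ((∫ t₂ in (0:ℝ)..ℓ, D2fun γ t₂ t₁)
          - om (γ t₁) (deriv γ t₁) * Q - P * om (deriv γ t₁) (deriv (deriv γ) t₁)) := by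
    intro t₁
    rw [intervalIntegral.integral_congr (fun t₂ _ => key t₁ t₂),
      intervalIntegral.integral_const_mul]
    congr 1
    rw [intervalIntegral.integral_sub, intervalIntegral.integral_sub,
      intervalIntegral.integral_add]
    · rw [hD2int t₁, add_zero, intervalIntegral.integral_const_mul,
        intervalIntegral.integral_mul_const]
    · exact (hcD2b t₁).intervalIntegrable 0 ℓ
    · exact (hcD2a t₁).intervalIntegrable 0 ℓ
    · exact (((hcD2b t₁).add (hcD2a t₁))).intervalIntegrable 0 ℓ
    · exact ((continuous_const.mul hcq)).intervalIntegrable 0 ℓ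
    · exact ((((hcD2b t₁).add (hcD2a t₁)).sub ((continuous_const.mul hcq))).intervalIntegrable 0 ℓ)
    · exact (hcp.mul continuous_const).intervalIntegrable 0 ℓ
  -- Fubini: the double integral of D2fun (swapped) vanishes
  have hswap : (∫ t₁ in (0:ℝ)..ℓ, ∫ t₂ in (0:ℝ)..ℓ, D2fun γ t₂ t₁) = 0 := by
    have hintg : Integrable (Function.uncurry fun t₁ t₂ => D2fun γ t₂ t₁)
        ((volume.restrict (Ioc (0:ℝ) ℓ)).prod (volume.restrict (Ioc (0:ℝ) ℓ))) := by
      rw [Measure.prod_restrict, ← Measure.volume_eq_prod]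
      have hcsw : Continuous (fun p : ℝ × ℝ => D2fun γ p.2 p.1) :=
        hcD2.comp continuous_swap
      have hIcc : IntegrableOn (fun p : ℝ × ℝ => D2fun γ p.2 p.1)
          (Icc (0:ℝ) ℓ ×ˢ Icc (0:ℝ) ℓ) volume :=
        hcsw.continuousOn.integrableOn_compact (isCompact_Icc.prod isCompact_Icc)
      exact hIcc.mono_set (Set.prod_mono Ioc_subset_Icc_self Ioc_subset_Icc_self)
    have := MeasureTheory.integral_integral_swap hintg
    simp only [intervalIntegral.integral_of_le h0]
    rw [this]
    have : ∀ t₂ : ℝ, (∫ t₁ in Ioc (0:ℝ) ℓ, D2fun γ t₂ t₁) = 0 := fun t₂ => by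
      rw [← intervalIntegral.integral_of_le h0]; exact hD2int t₂
    simp [this]
  -- outer integral computation
  have hcF : Continuous (fun t₁ => ∫ t₂ in (0:ℝ)..ℓ, D2fun γ t₂ t₁) := by
    exact intervalIntegral.continuous_parametric_intervalIntegral_of_continuous'
      (f := fun t₁ t₂ => D2fun γ t₂ t₁) (hcD2.comp continuous_swap) 0 ℓ
  rw [intervalIntegral.integral_congr (fun t₁ _ => hinner t₁),
    intervalIntegral.integral_const_mul]
  rw [intervalIntegral.integral_sub, intervalIntegral.integral_sub]
  · rw [hswap, intervalIntegral.integral_mul_const, intervalIntegral.integral_const_mul,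
      ← hP, ← hQ]
    ring
  · exact hcF.intervalIntegrable 0 ℓ
  · exact (hcp.mul continuous_const).intervalIntegrable 0 ℓ
  · exact (hcF.sub (hcp.mul continuous_const)).intervalIntegrable 0 ℓ
  · exact ((continuous_const.mul hcq)).intervalIntegrable 0 ℓ
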